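/- arXiv:1506.03549 — 2 statements merged into one kernel-verified Lean document; each statement's English description precedes it below -/
import Mathlib

section
/- Let (A, M, H1) be a sparse approximation triple with sparse approximation ratio a_A, let H2 be a Hilbert space, and let T ∈ B(H1,H2) satisfy the restricted isometry property on 2A with constant δ := δ_{2A}(T) < √2/2. Let F : H1 → H2 be a continuous map with F(0) = 0 such that γ := γ_{F,T}(2A) < √2/2 − √δ. Then F has the sparse Riesz property: for all x ∈ M, ‖F(x)‖ ≥ (1 − √2(√δ + γ))·‖x‖_{H1} − (√δ + γ)·√a_A·σ_{A,M}(x). -/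
/-- A set-valued "best approximator": `y` is a best approximation of `x` in `K` (w.r.t. the norm
of `M`). -/
def IsBestApprox {M : Type*} [NormedAddCommGroup M] (K : Set M) (x y : M) : Prop :=
  y ∈ K ∧ ∀ z ∈ K, ‖x - y‖ ≤ ‖x - z‖

/-- A sparse approximation triple `(A, M, H1)`: the Banach space `M` is continuously embedded
into the Hilbert space `H1` via `j` with embedding norm at most one, `A = ⋃ i, A_i` is a union of
closed linear subspaces, every nonempty closed subset of `M` is proximinal, best approximators
onto each `A_i` w.r.t. the `M`-norm are also best approximators w.r.t. the `H1`-norm, the norms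
split along such best approximators, and `⋃_{k ≥ 1} kA` is dense in `H1`. -/
structure SparseApproxTriple (H1 : Type*) [NormedAddCommGroup H1] [InnerProductSpace ℝ H1]
    (M : Type*) [NormedAddCommGroup M] [NormedSpace ℝ M] (I : Type*) where
  /-- the (injective, norm at most one) embedding of `M` into `H1` -/
  j : M →ₗ[ℝ] H1
  j_inj : Function.Injective j
  j_norm_le : ∀ x : M, ‖j x‖ ≤ ‖x‖
  /-- the subspaces whose union is `A` -/
  Asub : I → Submodule ℝ M
  index_nonempty : Nonempty I
  Asub_closed : ∀ i : I, IsClosed (Asub i : Set M)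
  A_closed : IsClosed (⋃ i : I, (Asub i : Set M))
  /-- proximinality: every nonempty closed subset of `M` is proximinal -/
  prox : ∀ K : Set M, K.Nonempty → IsClosed K → ∀ x : M, ∃ y ∈ K, ∀ z ∈ K, ‖x - y‖ ≤ ‖x - z‖
  /-- common best approximator property -/
  common_best : ∀ (i : I) (x y : M), y ∈ Asub i → (∀ z ∈ Asub i, ‖x - y‖ ≤ ‖x - z‖) →
    ∀ z ∈ Asub i, ‖j x - j y‖ ≤ ‖j x - j z‖
  /-- norm splitting in `M` -/
  norm_split_M : ∀ (i : I) (x y : M), y ∈ Asub i → (∀ z ∈ Asub i, ‖x - y‖ ≤ ‖x - z‖) →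
    ‖x‖ = ‖y‖ + ‖x - y‖
  /-- norm splitting in `H1` -/
  norm_split_H : ∀ (i : I) (x y : M), y ∈ Asub i → (∀ z ∈ Asub i, ‖x - y‖ ≤ ‖x - z‖) →
    ‖j x‖ ^ 2 = ‖j y‖ ^ 2 + ‖j x - j y‖ ^ 2
  /-- the embedding of `A` into `M` is bounded (so that the sparsity `s_A` is finite) -/
  sA_bddAbove : BddAbove
    {r : ℝ | ∃ x : M, x ∈ (⋃ i : I, (Asub i : Set M)) ∧ x ≠ 0 ∧ r = ‖x‖ / ‖j x‖}
  /-- sparse density: `⋃_{k ≥ 1} kA` is dense in `H1` -/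
  sparse_dense : Dense (⋃ k : ℕ, {u : H1 | ∃ f : Fin (k + 1) → M,
    (∀ n, f n ∈ ⋃ i : I, (Asub i : Set M)) ∧ u = ∑ n, j (f n)})

namespace SparseApproxTriple

variable {H1 : Type*} [NormedAddCommGroup H1] [InnerProductSpace ℝ H1]
  {M : Type*} [NormedAddCommGroup M] [NormedSpace ℝ M] {I : Type*}

/-- The union `A = ⋃ i, A_i`, as a subset of `M`. -/
def A (S : SparseApproxTriple H1 M I) : Set M := ⋃ i : I, (S.Asub i : Set M)

/-- `σ_{A,M}(x) := inf_{z ∈ A} ‖x − z‖_M`, the best sparse approximation error. -/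
noncomputable def sigma (S : SparseApproxTriple H1 M I) (x : M) : ℝ :=
  sInf ((fun z => ‖x - z‖) '' S.A)

/-- The sparsity `s_A := (sup_{0 ≠ x ∈ A} ‖x‖_M/‖x‖_{H1})²`. -/
noncomputable def sA (S : SparseApproxTriple H1 M I) : ℝ :=
  (sSup {r : ℝ | ∃ x : M, x ∈ S.A ∧ x ≠ 0 ∧ r = ‖x‖ / ‖S.j x‖}) ^ 2

/-- The sparse approximation ratio
`a_A := sup_{0 ≠ x ∈ M} (‖u_{A,M}‖_{H1}/‖x_{A,M}‖_M)²`, where `x_{A,M}` is a best approximator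
of `x` in `A` and `u_{A,M}` a best approximator of `x − x_{A,M}` in `A` (both w.r.t. the norm of
`M`). -/
noncomputable def aA (S : SparseApproxTriple H1 M I) : ℝ :=
  sSup {r : ℝ | ∃ x xa u : M, x ≠ 0 ∧ IsBestApprox S.A x xa ∧
    IsBestApprox S.A (x - xa) u ∧ r = (‖S.j u‖ / ‖xa‖) ^ 2}

/-- `kA := {x₁ + ⋯ + x_k : x₁, …, x_k ∈ A}`. -/
def sumSet (S : SparseApproxTriple H1 M I) (k : ℕ) : Set M :=
  {x : M | ∃ f : Fin k → M, (∀ n, f n ∈ S.A) ∧ x = ∑ n, f n}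

end SparseApproxTriple

open Finset Filter Topology
open scoped RealInnerProductSpace

namespace SparseApproxTriple

variable {H1 : Type*} [NormedAddCommGroup H1] [InnerProductSpace ℝ H1]
  {M : Type*} [NormedAddCommGroup M] [NormedSpace ℝ M] {I : Type*}

lemma zero_mem_A (S : SparseApproxTriple H1 M I) : (0 : M) ∈ S.A := by
  obtain ⟨i⟩ := S.index_nonempty
  exact Set.mem_iUnion.2 ⟨i, (S.Asub i).zero_mem⟩

lemma mem_sumSet_two_self (S : SparseApproxTriple H1 M I) {y : M} (hy : y ∈ S.A) :
    y ∈ S.sumSet 2 := by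
  refine ⟨![y, 0], ?_, ?_⟩
  · intro n
    fin_cases n <;> simp [hy, S.zero_mem_A]
  · simp [Fin.sum_univ_two]

lemma add_mem_sumSet_two (S : SparseApproxTriple H1 M I) {y z : M} (hy : y ∈ S.A)
    (hz : z ∈ S.A) : y + z ∈ S.sumSet 2 := by
  refine ⟨![y, z], ?_, ?_⟩
  · intro n
    fin_cases n <;> simpa
  · simp [Fin.sum_univ_two]

lemma smul_mem_A (S : SparseApproxTriple H1 M I) {y : M} (hy : y ∈ S.A) (c : ℝ) :
    c • y ∈ S.A := by
  obtain ⟨_, ⟨i, rfl⟩, hyi⟩ := hy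
  exact Set.mem_iUnion.2 ⟨i, (S.Asub i).smul_mem c hyi⟩

lemma sub_mem_sumSet_two (S : SparseApproxTriple H1 M I) {y z : M} (hy : y ∈ S.A)
    (hz : z ∈ S.A) : y - z ∈ S.sumSet 2 := by
  have := S.add_mem_sumSet_two hy (S.smul_mem_A hz (-1))
  simpa [sub_eq_add_neg] using this

/-- the chosen best approximator of `y` in `A` -/
noncomputable def ba (S : SparseApproxTriple H1 M I) (y : M) : M :=
  (S.prox S.A ⟨0, S.zero_mem_A⟩ S.A_closed y).choose

lemma ba_mem (S : SparseApproxTriple H1 M I) (y : M) : S.ba y ∈ S.A :=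
  (S.prox S.A ⟨0, S.zero_mem_A⟩ S.A_closed y).choose_spec.1

lemma ba_best (S : SparseApproxTriple H1 M I) (y : M) :
    ∀ z ∈ S.A, ‖y - S.ba y‖ ≤ ‖y - z‖ :=
  (S.prox S.A ⟨0, S.zero_mem_A⟩ S.A_closed y).choose_spec.2

lemma ba_zero (S : SparseApproxTriple H1 M I) : S.ba 0 = 0 := by
  have h := S.ba_best 0 0 S.zero_mem_A
  simp only [zero_sub, sub_zero, norm_neg, norm_zero] at h
  exact norm_le_zero_iff.1 h

/-- a best approximator over `A` is a best approximator over the subspace it lies in -/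
lemma best_on_sub (S : SparseApproxTriple H1 M I) {w b : M} (hbA : b ∈ S.A)
    (hb : ∀ z ∈ S.A, ‖w - b‖ ≤ ‖w - z‖) :
    ∃ i, b ∈ S.Asub i ∧ ∀ z ∈ S.Asub i, ‖w - b‖ ≤ ‖w - z‖ := by
  obtain ⟨_, ⟨i, rfl⟩, hbi⟩ := hbA
  exact ⟨i, hbi, fun z hz => hb z (Set.mem_iUnion.2 ⟨i, hz⟩)⟩

lemma split_M (S : SparseApproxTriple H1 M I) {w b : M} (hbA : b ∈ S.A)
    (hb : ∀ z ∈ S.A, ‖w - b‖ ≤ ‖w - z‖) : ‖w‖ = ‖b‖ + ‖w - b‖ := by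
  obtain ⟨i, hbi, hbest⟩ := S.best_on_sub hbA hb
  exact S.norm_split_M i w b hbi hbest

lemma split_H (S : SparseApproxTriple H1 M I) {w b : M} (hbA : b ∈ S.A)
    (hb : ∀ z ∈ S.A, ‖w - b‖ ≤ ‖w - z‖) :
    ‖S.j w‖ ^ 2 = ‖S.j b‖ ^ 2 + ‖S.j w - S.j b‖ ^ 2 := by
  obtain ⟨i, hbi, hbest⟩ := S.best_on_sub hbA hb
  exact S.norm_split_H i w b hbi hbest


end SparseApproxTriple

/-- if `0` minimizes `t ↦ ‖a - t • b‖` then `a ⊥ b` -/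
lemma inner_eq_zero_of_min' {E : Type*} [NormedAddCommGroup E] [InnerProductSpace ℝ E]
    {a b : E} (h : ∀ t : ℝ, ‖a‖ ≤ ‖a - t • b‖) : ⟪a, b⟫ = 0 := by
  by_cases hb : b = 0
  · simp [hb]
  have hb2 : 0 < ‖b‖ ^ 2 := pow_pos (norm_pos_iff.2 hb) 2
  set t : ℝ := ⟪a, b⟫ / ‖b‖ ^ 2 with ht
  have h1 := h t
  have h2 : ‖a‖ ^ 2 ≤ ‖a - t • b‖ ^ 2 := by
    have := mul_self_le_mul_self (norm_nonneg a) h1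
    simpa [pow_two] using this
  have hexp : ‖a - t • b‖ ^ 2 = ‖a‖ ^ 2 - 2 * (t * ⟪a, b⟫) + t ^ 2 * ‖b‖ ^ 2 := by
    rw [norm_sub_sq_real, real_inner_smul_right, norm_smul, Real.norm_eq_abs, mul_pow, sq_abs]
  rw [hexp] at h2
  have hip : ⟪a, b⟫ = t * ‖b‖ ^ 2 := by rw [ht]; field_simp
  rw [hip]
  have htz : t = 0 := by
    rw [hip] at h2
    have h8 : t ^ 2 * ‖b‖ ^ 2 ≤ 0 := by nlinarith [h2]
    have h7 : t ^ 2 = 0 := by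
      rcases eq_or_lt_of_le (sq_nonneg t) with h9 | h9
      · exact h9.symm
      · exact absurd h8 (by nlinarith [mul_pos h9 hb2])
    exact (pow_eq_zero_iff two_ne_zero).1 h7
  rw [htz]; ring

namespace SparseApproxTriple

variable {H1 : Type*} [NormedAddCommGroup H1] [InnerProductSpace ℝ H1]
  {M : Type*} [NormedAddCommGroup M] [NormedSpace ℝ M] {I : Type*}

/-- key inner-product bound: for any best approximator `b` of `w` over `A` and any `z ∈ A`,
`|⟪j w, j z⟫| ≤ ‖b‖_M ‖j z‖`. -/
lemma inner_le_of_best (S : SparseApproxTriple H1 M I) {w b : M} (hbA : b ∈ S.A)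
    (hb : ∀ z ∈ S.A, ‖w - b‖ ≤ ‖w - z‖) {z : M} (hz : z ∈ S.A) :
    |⟪S.j w, S.j z⟫| ≤ ‖b‖ * ‖S.j z‖ := by
  obtain ⟨_, ⟨i, rfl⟩, hzi⟩ := hz
  -- best approximator of w over Asub i
  obtain ⟨y, hyi, hybest⟩ := S.prox (S.Asub i) ⟨0, (S.Asub i).zero_mem⟩ (S.Asub_closed i) w
  have hyH := S.common_best i w y hyi hybest
  -- orthogonality of j w - j y to j z
  have horth : ⟪S.j w - S.j y, S.j z⟫ = 0 := by
    apply inner_eq_zero_of_min'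
    intro t
    have hmem : y + t • z ∈ S.Asub i := (S.Asub i).add_mem hyi ((S.Asub i).smul_mem t hzi)
    have := hyH (y + t • z) hmem
    calc ‖S.j w - S.j y‖ ≤ ‖S.j w - S.j (y + t • z)‖ := this
      _ = ‖S.j w - S.j y - t • S.j z‖ := by rw [map_add, map_smul]; abel_nf
  have heq : ⟪S.j w, S.j z⟫ = ⟪S.j y, S.j z⟫ := by
    have := inner_sub_left (𝕜 := ℝ) (S.j w) (S.j y) (S.j z)
    rw [horth] at this
    linarith [this.symm]
  rw [heq]
  calc |⟪S.j y, S.j z⟫| ≤ ‖S.j y‖ * ‖S.j z‖ := abs_real_inner_le_norm _ _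
    _ ≤ ‖y‖ * ‖S.j z‖ := by
        apply mul_le_mul_of_nonneg_right (S.j_norm_le y) (norm_nonneg _)
    _ ≤ ‖b‖ * ‖S.j z‖ := by
        apply mul_le_mul_of_nonneg_right _ (norm_nonneg _)
        have h1 : ‖w‖ = ‖y‖ + ‖w - y‖ := S.norm_split_M i w y hyi hybest
        have h2 : ‖w‖ = ‖b‖ + ‖w - b‖ := S.split_M hbA hb
        have h3 : ‖w - b‖ ≤ ‖w - y‖ := hb y (Set.mem_iUnion.2 ⟨i, hyi⟩)
        linarith

/-- the residual of a best approximation is orthogonal (in `H1`) to the approximator -/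
lemma inner_residual_self (S : SparseApproxTriple H1 M I) {v u : M} (huA : u ∈ S.A)
    (hu : ∀ z ∈ S.A, ‖v - u‖ ≤ ‖v - z‖) :
    ⟪S.j v - S.j u, S.j u⟫ = 0 := by
  obtain ⟨i, hui, hbest⟩ := S.best_on_sub huA hu
  have huH := S.common_best i v u hui hbest
  apply inner_eq_zero_of_min'
  intro t
  have hmem : u + t • u ∈ S.Asub i := (S.Asub i).add_mem hui ((S.Asub i).smul_mem t hui)
  have := huH (u + t • u) hmem
  calc ‖S.j v - S.j u‖ ≤ ‖S.j v - S.j (u + t • u)‖ := this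
    _ = ‖S.j v - S.j u - t • S.j u‖ := by rw [map_add, map_smul]; abel_nf


/-- the set defining `aA` is bounded above by `4` -/
lemma aA_set_bddAbove (S : SparseApproxTriple H1 M I) :
    BddAbove {r : ℝ | ∃ x xa u : M, x ≠ 0 ∧ IsBestApprox S.A x xa ∧
      IsBestApprox S.A (x - xa) u ∧ r = (‖S.j u‖ / ‖xa‖) ^ 2} := by
  refine ⟨4, ?_⟩
  rintro r ⟨x, xa, u, -, ⟨hxaA, hxabest⟩, ⟨huA, hubest⟩, rfl⟩
  by_cases hxa : ‖xa‖ = 0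
  · rw [hxa]
    norm_num
  have hxa0 : 0 < ‖xa‖ := lt_of_le_of_ne (norm_nonneg _) (Ne.symm hxa)
  -- ‖j u‖ ≤ 2 ‖xa‖
  have horth := S.inner_residual_self huA hubest
  have he : ⟪S.j (x - xa), S.j u⟫ = ‖S.j u‖ ^ 2 := by
    have h1 := inner_sub_left (𝕜 := ℝ) (S.j (x - xa)) (S.j u) (S.j u)
    rw [horth] at h1
    have h2 : ⟪S.j u, S.j u⟫ = ‖S.j u‖ ^ 2 := real_inner_self_eq_norm_sq _
    linarith [h1.symm]
  have hx_le : |⟪S.j x, S.j u⟫| ≤ ‖xa‖ * ‖S.j u‖ := S.inner_le_of_best hxaA hxabest huA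
  have hxa_le : |⟪S.j xa, S.j u⟫| ≤ ‖xa‖ * ‖S.j u‖ := by
    calc |⟪S.j xa, S.j u⟫| ≤ ‖S.j xa‖ * ‖S.j u‖ := abs_real_inner_le_norm _ _
      _ ≤ ‖xa‖ * ‖S.j u‖ := by
          exact mul_le_mul_of_nonneg_right (S.j_norm_le xa) (norm_nonneg _)
  have hsub : ⟪S.j (x - xa), S.j u⟫ = ⟪S.j x, S.j u⟫ - ⟪S.j xa, S.j u⟫ := by
    rw [map_sub]; exact inner_sub_left _ _ _
  have hju : ‖S.j u‖ ^ 2 ≤ 2 * ‖xa‖ * ‖S.j u‖ := by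
    rw [← he, hsub]
    have := abs_le.1 hx_le
    have := abs_le.1 hxa_le
    linarith [(abs_le.1 hx_le).2, (abs_le.1 hxa_le).1]
  have hle : ‖S.j u‖ ≤ 2 * ‖xa‖ := by nlinarith [norm_nonneg (S.j u)]
  have hdiv : ‖S.j u‖ / ‖xa‖ ≤ 2 := by
    rw [div_le_iff₀ hxa0]
    linarith
  calc (‖S.j u‖ / ‖xa‖) ^ 2 ≤ 2 ^ 2 := by
        apply pow_le_pow_left₀ (by positivity) hdiv
    _ = 4 := by norm_num

lemma aA_nonneg (S : SparseApproxTriple H1 M I) : 0 ≤ S.aA :=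
  Real.sSup_nonneg (by rintro r ⟨x, xa, u, -, -, -, rfl⟩; positivity)

/-- the key per-step bound: the `H1`-norm of the second greedy step is controlled by
`√aA` times the `M`-norm of the first. -/
lemma ju_le (S : SparseApproxTriple H1 M I) (y : M) :
    ‖S.j (S.ba (y - S.ba y))‖ ≤ Real.sqrt S.aA * ‖S.ba y‖ := by
  by_cases h0 : S.ba y = 0
  · rw [h0, sub_zero, h0]
    simp
  have hy0 : y ≠ 0 := fun hy => h0 (by rw [hy]; exact S.ba_zero)
  have hba0 : 0 < ‖S.ba y‖ := norm_pos_iff.2 h0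
  set u := S.ba (y - S.ba y) with hu
  have hmem : (‖S.j u‖ / ‖S.ba y‖) ^ 2 ∈ {r : ℝ | ∃ x xa u : M, x ≠ 0 ∧
      IsBestApprox S.A x xa ∧ IsBestApprox S.A (x - xa) u ∧ r = (‖S.j u‖ / ‖xa‖) ^ 2} :=
    ⟨y, S.ba y, u, hy0, ⟨S.ba_mem y, S.ba_best y⟩, ⟨S.ba_mem _, S.ba_best _⟩, rfl⟩
  have hle : (‖S.j u‖ / ‖S.ba y‖) ^ 2 ≤ S.aA := le_csSup S.aA_set_bddAbove hmem
  have h1 : ‖S.j u‖ / ‖S.ba y‖ ≤ Real.sqrt S.aA := by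
    rw [show ‖S.j u‖ / ‖S.ba y‖ = Real.sqrt ((‖S.j u‖ / ‖S.ba y‖) ^ 2) from
      (Real.sqrt_sq (by positivity)).symm]
    exact Real.sqrt_le_sqrt hle
  calc ‖S.j u‖ = ‖S.j u‖ / ‖S.ba y‖ * ‖S.ba y‖ := by field_simp
    _ ≤ Real.sqrt S.aA * ‖S.ba y‖ := mul_le_mul_of_nonneg_right h1 (norm_nonneg _)


/-- polarization consequence of the RIP on `2A`: for `y, z ∈ A`,
`⟪jy, jz⟫ - ⟪T jy, T jz⟫ ≤ δ ‖jy‖ ‖jz‖`. -/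
lemma rip_inner_le {H2 : Type*} [NormedAddCommGroup H2] [InnerProductSpace ℝ H2]
    (S : SparseApproxTriple H1 M I) (T : H1 →L[ℝ] H2) {δ : ℝ}
    (hRIP : ∀ z ∈ S.sumSet 2,
      (1 - δ) * ‖S.j z‖ ^ 2 ≤ ‖T (S.j z)‖ ^ 2 ∧ ‖T (S.j z)‖ ^ 2 ≤ (1 + δ) * ‖S.j z‖ ^ 2)
    {y z : M} (hy : y ∈ S.A) (hz : z ∈ S.A) :
    ⟪S.j y, S.j z⟫ - ⟪T (S.j y), T (S.j z)⟫ ≤ δ * (‖S.j y‖ * ‖S.j z‖) := by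
  have key : ∀ y' ∈ S.A, ∀ z' ∈ S.A, ⟪S.j y', S.j z'⟫ - ⟪T (S.j y'), T (S.j z')⟫ ≤
      δ / 2 * (‖S.j y'‖ ^ 2 + ‖S.j z'‖ ^ 2) := by
    intro y' hy' z' hz'
    obtain ⟨h1, -⟩ := hRIP (y' + z') (S.add_mem_sumSet_two hy' hz')
    obtain ⟨-, h2⟩ := hRIP (y' - z') (S.sub_mem_sumSet_two hy' hz')
    rw [map_add] at h1
    rw [map_sub] at h2
    have np : ‖S.j y' + S.j z'‖ ^ 2 =
        ‖S.j y'‖ ^ 2 + 2 * ⟪S.j y', S.j z'⟫ + ‖S.j z'‖ ^ 2 := norm_add_sq_real _ _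
    have nm : ‖S.j y' - S.j z'‖ ^ 2 =
        ‖S.j y'‖ ^ 2 - 2 * ⟪S.j y', S.j z'⟫ + ‖S.j z'‖ ^ 2 := norm_sub_sq_real _ _
    have tp : ‖T (S.j y' + S.j z')‖ ^ 2 =
        ‖T (S.j y')‖ ^ 2 + 2 * ⟪T (S.j y'), T (S.j z')⟫ + ‖T (S.j z')‖ ^ 2 := by
      rw [map_add]; exact norm_add_sq_real _ _
    have tm : ‖T (S.j y' - S.j z')‖ ^ 2 =
        ‖T (S.j y')‖ ^ 2 - 2 * ⟪T (S.j y'), T (S.j z')⟫ + ‖T (S.j z')‖ ^ 2 := by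
      rw [map_sub]; exact norm_sub_sq_real _ _
    rw [np, tp] at h1
    rw [nm, tm] at h2
    nlinarith [h1, h2]
  by_cases hy0 : ‖S.j y‖ = 0
  · have hjy : S.j y = 0 := norm_eq_zero.1 hy0
    rw [hjy]
    simp
  by_cases hz0 : ‖S.j z‖ = 0
  · have hjz : S.j z = 0 := norm_eq_zero.1 hz0
    rw [hjz]
    simp
  have hyp : 0 < ‖S.j y‖ := lt_of_le_of_ne (norm_nonneg _) (Ne.symm hy0)
  have hzp : 0 < ‖S.j z‖ := lt_of_le_of_ne (norm_nonneg _) (Ne.symm hz0)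
  set t : ℝ := Real.sqrt (‖S.j z‖ / ‖S.j y‖) with htdef
  have htpos : 0 < t := Real.sqrt_pos.2 (div_pos hzp hyp)
  have ht2 : t ^ 2 = ‖S.j z‖ / ‖S.j y‖ := Real.sq_sqrt (div_pos hzp hyp).le
  have h := key (t • y) (S.smul_mem_A hy t) (t⁻¹ • z) (S.smul_mem_A hz t⁻¹)
  rw [map_smul, map_smul] at h
  rw [real_inner_smul_left, real_inner_smul_right] at h
  rw [map_smul, map_smul, real_inner_smul_left, real_inner_smul_right] at h
  have hns : ∀ (c : ℝ) (w : H1), ‖c • w‖ ^ 2 = c ^ 2 * ‖w‖ ^ 2 := fun c w => by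
    rw [norm_smul, Real.norm_eq_abs, mul_pow, sq_abs]
  rw [hns t (S.j y), hns t⁻¹ (S.j z)] at h
  have hq : t ^ 2 * ‖S.j y‖ ^ 2 = ‖S.j z‖ * ‖S.j y‖ := by
    rw [ht2]; field_simp
  have hq' : t⁻¹ ^ 2 * ‖S.j z‖ ^ 2 = ‖S.j y‖ * ‖S.j z‖ := by
    rw [inv_pow, ht2]; field_simp
  rw [hq, hq'] at h
  have hip : t * (t⁻¹ * ⟪S.j y, S.j z⟫) = ⟪S.j y, S.j z⟫ := by
    field_simp
  have hip2 : t * (t⁻¹ * ⟪T (S.j y), T (S.j z)⟫) = ⟪T (S.j y), T (S.j z)⟫ := by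
    field_simp
  rw [hip, hip2] at h
  nlinarith [h]

end SparseApproxTriple

set_option maxHeartbeats 1000000 in
/-- Let `T` satisfy the restricted isometry property on `2A` with constant
`δ < √2/2`, and let `F` be a continuous map with `F(0) = 0` and
`γ := γ_{F,T}(2A) < √2/2 − √δ` (here `γ` is an upper bound for
`‖F(x+z) − F(x) − Tz‖/‖z‖_{H1}` over `x ∈ M`, `z ∈ 2A`).  Then `F` has the sparse Riesz property
`‖F(x)‖ ≥ (1 − √2(√δ + γ))‖x‖_{H1} − (√δ + γ)√a_A·σ_{A,M}(x)` for all `x ∈ M`. -/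
theorem sparse_riesz_of_rip
    {H1 : Type*} [NormedAddCommGroup H1] [InnerProductSpace ℝ H1] [CompleteSpace H1]
    {H2 : Type*} [NormedAddCommGroup H2] [InnerProductSpace ℝ H2] [CompleteSpace H2]
    {M : Type*} [NormedAddCommGroup M] [NormedSpace ℝ M] [CompleteSpace M]
    {I : Type*} (S : SparseApproxTriple H1 M I)
    (T : H1 →L[ℝ] H2) (δ : ℝ) (hδ0 : 0 ≤ δ) (hδ1 : δ < 1)
    (hRIP : ∀ z ∈ S.sumSet 2,
      (1 - δ) * ‖S.j z‖ ^ 2 ≤ ‖T (S.j z)‖ ^ 2 ∧ ‖T (S.j z)‖ ^ 2 ≤ (1 + δ) * ‖S.j z‖ ^ 2)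
    (hδsmall : δ < Real.sqrt 2 / 2)
    (F : H1 → H2) (hFcont : Continuous F) (hF0 : F 0 = 0)
    (γ : ℝ)
    (hγ : ∀ x : M, ∀ z ∈ S.sumSet 2,
      ‖F (S.j x + S.j z) - F (S.j x) - T (S.j z)‖ ≤ γ * ‖S.j z‖)
    (hγlt : γ < Real.sqrt 2 / 2 - Real.sqrt δ) :
    ∀ x : M,
      (1 - Real.sqrt 2 * (Real.sqrt δ + γ)) * ‖S.j x‖ -
          (Real.sqrt δ + γ) * Real.sqrt S.aA * S.sigma x ≤ ‖F (S.j x)‖ := by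
  intro x
  set β : ℝ := Real.sqrt δ + γ with hβdef
  by_cases hβ : 0 ≤ β
  swap
  · -- degenerate case : γ < -√δ forces everything to vanish
    push_neg at hβ
    have hγneg : γ < 0 := by have := Real.sqrt_nonneg δ; rw [hβdef] at hβ; linarith
    have hA0 : ∀ z ∈ S.A, S.j z = 0 := by
      intro z hz
      have h2 := hγ 0 z (S.mem_sumSet_two_self hz)
      rw [map_zero] at h2
      rw [zero_add, hF0, sub_zero] at h2
      have hnn : (0 : ℝ) ≤ γ * ‖S.j z‖ := le_trans (norm_nonneg _) h2
      have hle : ‖S.j z‖ ≤ 0 := by nlinarith [norm_nonneg (S.j z)]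
      exact norm_eq_zero.1 (le_antisymm hle (norm_nonneg _))
    have hH1 : ∀ v : H1, v = 0 := by
      intro v
      have hsub : (⋃ k : ℕ, {u : H1 | ∃ f : Fin (k + 1) → M,
          (∀ n, f n ∈ ⋃ i : I, (S.Asub i : Set M)) ∧ u = ∑ n, S.j (f n)}) ⊆ {(0 : H1)} := by
        rintro u hu
        simp only [Set.mem_iUnion, Set.mem_setOf_eq] at hu
        obtain ⟨k, f, hf, rfl⟩ := hu
        have hz : ∀ n, S.j (f n) = 0 := fun n => hA0 _ (Set.mem_iUnion.2 (hf n))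
        simp [hz]
      have h1 : (Set.univ : Set H1) ⊆ {(0 : H1)} := by
        rw [← S.sparse_dense.closure_eq]
        calc closure _ ⊆ closure {(0 : H1)} := closure_mono hsub
          _ = {(0 : H1)} := closure_singleton
      simpa using h1 (Set.mem_univ v)
    have hjx : S.j x = 0 := hH1 _
    have haA : S.aA = 0 := by
      apply le_antisymm _ S.aA_nonneg
      apply Real.sSup_le _ le_rfl
      rintro r ⟨x', xa, u, -, -, ⟨huA, -⟩, rfl⟩
      rw [hA0 u huA]
      simp
    rw [hjx, haA]
    simp [hF0]
  -- main case
  classical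
  -- the greedy sequence of residuals
  obtain ⟨r, hr0, hrS⟩ : ∃ r : ℕ → M, r 0 = x ∧ ∀ n, r (n + 1) = r n - S.ba (r n) :=
    ⟨fun n => Nat.rec x (fun _ p => p - S.ba p) n, rfl, fun n => rfl⟩
  obtain ⟨xk, hxkdef⟩ : ∃ xk : ℕ → M, ∀ n, xk n = S.ba (r n) := ⟨_, fun n => rfl⟩
  have hrS' : ∀ n, r (n + 1) = r n - xk n := fun n => by rw [hxkdef]; exact hrS n
  have hxkA : ∀ n, xk n ∈ S.A := fun n => by rw [hxkdef]; exact S.ba_mem _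
  have hxkbest : ∀ n, ∀ z ∈ S.A, ‖r n - xk n‖ ≤ ‖r n - z‖ := fun n => by
    rw [hxkdef]; exact S.ba_best _
  have hsplitM : ∀ n, ‖r n‖ = ‖xk n‖ + ‖r (n + 1)‖ := fun n => by
    rw [hrS' n]; exact S.split_M (hxkA n) (hxkbest n)
  have hsplitH : ∀ n, ‖S.j (r n)‖ ^ 2 = ‖S.j (xk n)‖ ^ 2 + ‖S.j (r (n + 1))‖ ^ 2 := fun n => by
    rw [hrS' n, map_sub]
    exact S.split_H (hxkA n) (hxkbest n)
  -- telescoping of M-norms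
  have hsumM : ∀ m n, ∑ i ∈ Finset.range n, ‖xk (m + i)‖ = ‖r m‖ - ‖r (m + n)‖ := by
    intro m n
    induction n with
    | zero => simp
    | succ n ih =>
      rw [Finset.sum_range_succ, ih]
      have h := hsplitM (m + n)
      have hmn : m + (n + 1) = (m + n) + 1 := by omega
      rw [hmn]
      linarith
  have hsumM_le : ∀ m n, ∑ i ∈ Finset.range n, ‖xk (m + i)‖ ≤ ‖r m‖ := fun m n => by
    rw [hsumM]
    linarith [norm_nonneg (r (m + n))]
  have hxsum : Summable fun i => ‖xk i‖ := by
    apply summable_of_sum_range_le (fun n => norm_nonneg _) (c := ‖r 0‖)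
    intro n
    simpa using hsumM_le 0 n
  have hasum : Summable fun i => ‖S.j (xk i)‖ :=
    Summable.of_nonneg_of_le (fun i => norm_nonneg _) (fun i => S.j_norm_le _) hxsum
  have haS : Summable fun i => S.j (xk i) := hasum.of_norm
  set s : H1 := ∑' i, S.j (xk i) with hs
  set Θ : ℝ := ∑' i, ‖S.j (xk i)‖ with hΘ
  have hps : Filter.Tendsto (fun n => ∑ i ∈ Finset.range n, S.j (xk i))
      Filter.atTop (nhds s) := haS.hasSum.tendsto_sum_nat
  have hpΘ : Filter.Tendsto (fun n => ∑ i ∈ Finset.range n, ‖S.j (xk i)‖)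
      Filter.atTop (nhds Θ) := hasum.hasSum.tendsto_sum_nat
  have hjr : ∀ n, S.j (r n) = S.j x - ∑ i ∈ Finset.range n, S.j (xk i) := by
    intro n
    induction n with
    | zero => simp [hr0]
    | succ n ih =>
      rw [Finset.sum_range_succ, hrS' n, map_sub, ih]
      abel
  have hjrt : Filter.Tendsto (fun n => S.j (r n)) Filter.atTop (nhds (S.j x - s)) := by
    simp only [hjr]
    exact tendsto_const_nhds.sub hps
  have hxkM0 : Filter.Tendsto (fun n => ‖xk n‖) Filter.atTop (nhds 0) :=
    hxsum.tendsto_atTop_zero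
  have horthA : ∀ z ∈ S.A, ⟪S.j x - s, S.j z⟫ = 0 := by
    intro z hz
    have h1 : Filter.Tendsto (fun n => ⟪S.j (r n), S.j z⟫) Filter.atTop
        (nhds ⟪S.j x - s, S.j z⟫) := hjrt.inner tendsto_const_nhds
    have h2 : Filter.Tendsto (fun n => ⟪S.j (r n), S.j z⟫) Filter.atTop (nhds 0) := by
      apply squeeze_zero_norm (a := fun n => ‖xk n‖ * ‖S.j z‖)
      · intro n
        rw [Real.norm_eq_abs]
        exact S.inner_le_of_best (hxkA n) (hxkbest n) hz
      · simpa using hxkM0.mul_const ‖S.j z‖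
    exact tendsto_nhds_unique h1 h2
  have hρ : S.j x - s = 0 := by
    have hclosed : IsClosed {u : H1 | ⟪S.j x - s, u⟫ = 0} :=
      isClosed_eq (Continuous.inner continuous_const continuous_id) continuous_const
    have hsub : (⋃ k : ℕ, {u : H1 | ∃ f : Fin (k + 1) → M,
        (∀ n, f n ∈ ⋃ i : I, (S.Asub i : Set M)) ∧ u = ∑ n, S.j (f n)}) ⊆
        {u : H1 | ⟪S.j x - s, u⟫ = 0} := by
      rintro u hu
      simp only [Set.mem_iUnion, Set.mem_setOf_eq] at hu ⊢
      obtain ⟨k, f, hf, rfl⟩ := hu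
      rw [inner_sum]
      exact Finset.sum_eq_zero fun n _ => horthA _ (Set.mem_iUnion.2 (hf n))
    have huniv : (Set.univ : Set H1) ⊆ {u : H1 | ⟪S.j x - s, u⟫ = 0} := by
      rw [← S.sparse_dense.closure_eq]
      exact closure_minimal hsub hclosed
    have h0 : ⟪S.j x - s, S.j x - s⟫ = (0 : ℝ) := huniv (Set.mem_univ _)
    exact inner_self_eq_zero.1 h0
  have hsx : s = S.j x := (sub_eq_zero.1 hρ).symm
  have hjr0 : Filter.Tendsto (fun n => S.j (r n)) Filter.atTop (nhds 0) := by
    rw [hρ] at hjrt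
    exact hjrt
  -- γ-telescoping
  have hFn : ∀ n, ‖F (S.j x) - F (S.j (r n)) - T (∑ i ∈ Finset.range n, S.j (xk i))‖ ≤
      γ * ∑ i ∈ Finset.range n, ‖S.j (xk i)‖ := by
    intro n
    induction n with
    | zero => simp [hr0]
    | succ n ih =>
      have hstep : ‖F (S.j (r n)) - F (S.j (r (n + 1))) - T (S.j (xk n))‖ ≤
          γ * ‖S.j (xk n)‖ := by
        have h := hγ (r (n + 1)) (xk n) (S.mem_sumSet_two_self (hxkA n))
        have he : S.j (r (n + 1)) + S.j (xk n) = S.j (r n) := by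
          rw [hrS' n, map_sub]
          abel
        rw [he] at h
        exact h
      have heq : F (S.j x) - F (S.j (r (n + 1))) -
          T (∑ i ∈ Finset.range (n + 1), S.j (xk i)) =
          (F (S.j x) - F (S.j (r n)) - T (∑ i ∈ Finset.range n, S.j (xk i))) +
          (F (S.j (r n)) - F (S.j (r (n + 1))) - T (S.j (xk n))) := by
        rw [Finset.sum_range_succ, map_add]
        abel
      rw [heq, Finset.sum_range_succ, mul_add]
      exact le_trans (norm_add_le _ _) (add_le_add ih hstep)
  have hFT : ‖F (S.j x) - T (S.j x)‖ ≤ γ * Θ := by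
    have hL : Filter.Tendsto
        (fun n => ‖F (S.j x) - F (S.j (r n)) - T (∑ i ∈ Finset.range n, S.j (xk i))‖)
        Filter.atTop (nhds ‖F (S.j x) - F 0 - T (S.j x)‖) := by
      apply Filter.Tendsto.norm
      refine Filter.Tendsto.sub (Filter.Tendsto.sub tendsto_const_nhds
        ((hFcont.tendsto 0).comp hjr0)) ?_
      have h := (T.continuous.tendsto s).comp hps
      rw [hsx] at h
      exact h
    have hR : Filter.Tendsto (fun n => γ * ∑ i ∈ Finset.range n, ‖S.j (xk i)‖)
        Filter.atTop (nhds (γ * Θ)) := hpΘ.const_mul γ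
    have := le_of_tendsto_of_tendsto' hL hR hFn
    simpa [hF0] using this
  -- RIP estimate on partial sums
  have hTn : ∀ n, ‖∑ i ∈ Finset.range n, S.j (xk i)‖ ≤
      ‖T (∑ i ∈ Finset.range n, S.j (xk i))‖ +
        Real.sqrt δ * ∑ i ∈ Finset.range n, ‖S.j (xk i)‖ := by
    intro n
    have hΘn0 : (0 : ℝ) ≤ ∑ i ∈ Finset.range n, ‖S.j (xk i)‖ :=
      Finset.sum_nonneg fun i _ => norm_nonneg _
    have hq : ‖∑ i ∈ Finset.range n, S.j (xk i)‖ ^ 2 -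
        ‖T (∑ i ∈ Finset.range n, S.j (xk i))‖ ^ 2 ≤
        δ * (∑ i ∈ Finset.range n, ‖S.j (xk i)‖) ^ 2 := by
      have e1 : ‖∑ i ∈ Finset.range n, S.j (xk i)‖ ^ 2 =
          ∑ k ∈ Finset.range n, ∑ l ∈ Finset.range n, ⟪S.j (xk k), S.j (xk l)⟫ := by
        rw [← real_inner_self_eq_norm_sq, sum_inner]
        exact Finset.sum_congr rfl fun k _ => inner_sum _ _ _
      have e2 : ‖T (∑ i ∈ Finset.range n, S.j (xk i))‖ ^ 2 =
          ∑ k ∈ Finset.range n, ∑ l ∈ Finset.range n,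
            ⟪T (S.j (xk k)), T (S.j (xk l))⟫ := by
        rw [← real_inner_self_eq_norm_sq, map_sum, sum_inner]
        exact Finset.sum_congr rfl fun k _ => inner_sum _ _ _
      rw [e1, e2, ← Finset.sum_sub_distrib]
      have e3 : δ * (∑ i ∈ Finset.range n, ‖S.j (xk i)‖) ^ 2 =
          ∑ k ∈ Finset.range n, ∑ l ∈ Finset.range n,
            δ * (‖S.j (xk k)‖ * ‖S.j (xk l)‖) := by
        rw [pow_two, Finset.sum_mul_sum, Finset.mul_sum]
        exact Finset.sum_congr rfl fun k _ => by rw [Finset.mul_sum]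
      rw [e3]
      apply Finset.sum_le_sum
      intro k _
      rw [← Finset.sum_sub_distrib]
      apply Finset.sum_le_sum
      intro l _
      exact S.rip_inner_le T hRIP (hxkA k) (hxkA l)
    have hd2 : Real.sqrt δ ^ 2 = δ := Real.sq_sqrt hδ0
    nlinarith [norm_nonneg (∑ i ∈ Finset.range n, S.j (xk i)),
      norm_nonneg (T (∑ i ∈ Finset.range n, S.j (xk i))),
      Real.sqrt_nonneg δ, mul_nonneg (Real.sqrt_nonneg δ) hΘn0,
      sq_nonneg (‖T (∑ i ∈ Finset.range n, S.j (xk i))‖ +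
        Real.sqrt δ * ∑ i ∈ Finset.range n, ‖S.j (xk i)‖ -
        ‖∑ i ∈ Finset.range n, S.j (xk i)‖),
      mul_nonneg (mul_nonneg (Real.sqrt_nonneg δ) hΘn0)
        (norm_nonneg (T (∑ i ∈ Finset.range n, S.j (xk i))))]
  have hT : ‖S.j x‖ ≤ ‖T (S.j x)‖ + Real.sqrt δ * Θ := by
    have hL : Filter.Tendsto (fun n => ‖∑ i ∈ Finset.range n, S.j (xk i)‖)
        Filter.atTop (nhds ‖S.j x‖) := by
      have h := hps.norm
      rw [hsx] at h
      exact h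
    have hR : Filter.Tendsto (fun n => ‖T (∑ i ∈ Finset.range n, S.j (xk i))‖ +
        Real.sqrt δ * ∑ i ∈ Finset.range n, ‖S.j (xk i)‖) Filter.atTop
        (nhds (‖T (S.j x)‖ + Real.sqrt δ * Θ)) := by
      apply Filter.Tendsto.add
      · have h := ((T.continuous.tendsto s).comp hps).norm
        rw [hsx] at h
        exact h
      · exact hpΘ.const_mul _
    exact le_of_tendsto_of_tendsto' hL hR hTn
  -- bounding Θ
  have hσ : ‖r 1‖ ≤ S.sigma x := by
    show ‖r 1‖ ≤ sInf ((fun z => ‖x - z‖) '' S.A)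
    refine le_csInf ⟨‖x - 0‖, ⟨0, S.zero_mem_A, rfl⟩⟩ ?_
    rintro b ⟨z, hz, rfl⟩
    have e1 : r 1 = r 0 - xk 0 := hrS' 0
    calc ‖r 1‖ = ‖r 0 - xk 0‖ := by rw [e1]
      _ ≤ ‖r 0 - z‖ := hxkbest 0 z hz
      _ = ‖x - z‖ := by rw [hr0]
  have htail1 : ∑' i, ‖xk (i + 1)‖ ≤ ‖r 1‖ := by
    apply Summable.tsum_le_of_sum_range_le ((summable_nat_add_iff 1).2 hxsum)
    intro n
    calc ∑ i ∈ Finset.range n, ‖xk (i + 1)‖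
        = ∑ i ∈ Finset.range n, ‖xk (1 + i)‖ := by
          exact Finset.sum_congr rfl fun i _ => by rw [Nat.add_comm]
      _ ≤ ‖r 1‖ := hsumM_le 1 n
  have hterm2 : ∀ i : ℕ, ‖S.j (xk (i + 2))‖ ≤ Real.sqrt S.aA * ‖xk (i + 1)‖ := by
    intro i
    have h := S.ju_le (r (i + 1))
    rw [← hxkdef (i + 1)] at h
    have he : r (i + 1) - xk (i + 1) = r (i + 2) := (hrS' (i + 1)).symm
    rw [he, ← hxkdef (i + 2)] at h
    exact h
  have htail2 : ∑' i, ‖S.j (xk (i + 2))‖ ≤ Real.sqrt S.aA * S.sigma x := by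
    have hsum2 : Summable fun i => ‖S.j (xk (i + 2))‖ := (summable_nat_add_iff 2).2 hasum
    have hsum1 : Summable fun i => ‖xk (i + 1)‖ := (summable_nat_add_iff 1).2 hxsum
    calc ∑' i, ‖S.j (xk (i + 2))‖ ≤ ∑' i, Real.sqrt S.aA * ‖xk (i + 1)‖ :=
          Summable.tsum_le_tsum hterm2 hsum2 (hsum1.mul_left _)
      _ = Real.sqrt S.aA * ∑' i, ‖xk (i + 1)‖ := tsum_mul_left
      _ ≤ Real.sqrt S.aA * S.sigma x :=
          mul_le_mul_of_nonneg_left (le_trans htail1 hσ) (Real.sqrt_nonneg _)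
  have h01 : ‖S.j (xk 0)‖ + ‖S.j (xk 1)‖ ≤ Real.sqrt 2 * ‖S.j x‖ := by
    have h1 := hsplitH 0
    have h2 := hsplitH 1
    rw [hr0] at h1
    have hs2 : Real.sqrt 2 ^ 2 = 2 := Real.sq_sqrt (by norm_num)
    nlinarith [norm_nonneg (S.j (xk 0)), norm_nonneg (S.j (xk 1)), norm_nonneg (S.j x),
      norm_nonneg (S.j (r 2)), Real.sqrt_nonneg 2,
      sq_nonneg (‖S.j (xk 0)‖ - ‖S.j (xk 1)‖),
      sq_nonneg (Real.sqrt 2 * ‖S.j x‖ - ‖S.j (xk 0)‖ - ‖S.j (xk 1)‖),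
      mul_nonneg (Real.sqrt_nonneg 2) (norm_nonneg (S.j x))]
  have hΘle : Θ ≤ Real.sqrt 2 * ‖S.j x‖ + Real.sqrt S.aA * S.sigma x := by
    have hdecomp := Summable.sum_add_tsum_nat_add (f := fun i => ‖S.j (xk i)‖) 2 hasum
    have hr2 : ∑ i ∈ Finset.range 2, ‖S.j (xk i)‖ = ‖S.j (xk 0)‖ + ‖S.j (xk 1)‖ := by
      rw [Finset.sum_range_succ, Finset.sum_range_one]
    rw [hr2] at hdecomp
    have : Θ = ‖S.j (xk 0)‖ + ‖S.j (xk 1)‖ + ∑' i, ‖S.j (xk (i + 2))‖ := by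
      rw [hΘ, ← hdecomp]
    rw [this]
    linarith [htail2, h01]
  -- conclusion
  have hTF : ‖T (S.j x)‖ ≤ ‖F (S.j x)‖ + γ * Θ := by
    calc ‖T (S.j x)‖ = ‖F (S.j x) - (F (S.j x) - T (S.j x))‖ := by rw [sub_sub_cancel]
      _ ≤ ‖F (S.j x)‖ + ‖F (S.j x) - T (S.j x)‖ := norm_sub_le _ _
      _ ≤ ‖F (S.j x)‖ + γ * Θ := by linarith [hFT]
  have hβΘ : β * Θ = Real.sqrt δ * Θ + γ * Θ := by rw [hβdef]; ring
  have hmain : ‖S.j x‖ - β * Θ ≤ ‖F (S.j x)‖ := by linarith [hT, hTF, hβΘ]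
  have hfin : β * Θ ≤ β * (Real.sqrt 2 * ‖S.j x‖ + Real.sqrt S.aA * S.sigma x) :=
    mul_le_mul_of_nonneg_left hΘle hβ
  nlinarith [hmain, hfin]
end

section
/- Let (A, M, H1) be a sparse approximation triple with sparse approximation ratio a_A, let H2 be a Hilbert space, T ∈ B(H1,H2) satisfy the restricted isometry property on 2A with δ_{2A}(T) < √2/2, and let F : H1 → H2 be continuous with F(0) = 0, γ_{F,T}(2A) < √2/2 − √(δ_{2A}(T)), and γ_{F,T}(4A) < ∞. Then F is almost linear on A: for all x, y ∈ M, ‖F(x) − F(y) − F(x−y)‖ ≤ 2γ_{F,T}(4A)·‖x−y‖_{H1} + 2(γ_{F,T}(2A) + γ_{F,T}(4A))·√a_A·(σ_{A,M}(x) + σ_{A,M}(y)). -/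
/-!
Expand `x` greedily: `r₀ = x`, `rₙ₊₁ = rₙ - gₙ` with `gₙ` a best `M`-approximation of `rₙ` in `A`.
Norm splitting in `M` gives `∑ ‖gₙ‖_M ≤ ‖x‖_M`, and the definition of `a_A` gives
`‖gₙ₊₁‖_{H1} ≤ √a_A ‖gₙ‖_M`, so the atoms from the third one on have total `H1`-length at most
`√a_A σ(x)`. Each `rₙ` is orthogonal to `A` up to `‖gₙ‖_M`, so `⟪j rₙ, ·⟫ → 0` on the dense set
`⋃ kA`, hence everywhere by uniform boundedness; testing against `j x = j rₙ + ∑_{k<n} j gₖ` then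
gives `j rₙ → 0`. Now `x - y` is the `4A`-element `(g₀ + g₁)(x) - (g₀ + g₁)(y)` followed by the
series of `2A`-elements `gₖ(x) - gₖ(y)`, `k ≥ 2`; telescoping the defect `F(w + z) - F(w) - T z`
along it, and passing to the limit by continuity of `F`, bounds the defect at any base point `w`.
Since `F 0 = 0`, the claim is the difference of the defects at `w = y` and `w = 0`.
-/

open scoped RealInnerProductSpace NNReal
open Filter Topology Finset

lemma tendsto_inner_of_dense {E : Type*} [NormedAddCommGroup E] [InnerProductSpace ℝ E]
    {ι : Type*} {l : Filter ι} {u : ι → E} {C : ℝ≥0} (hu : ∀ i, ‖u i‖ ≤ C) {D : Set E}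
    (hD : Dense D) (h : ∀ d ∈ D, Tendsto (fun i => ⟪u i, d⟫) l (𝓝 0)) (v : E) :
    Tendsto (fun i => ⟪u i, v⟫) l (𝓝 0) := by
  have hlip : ∀ i, LipschitzWith C (fun w => ⟪u i, w⟫) := fun i =>
    LipschitzWith.of_dist_le_mul fun w w' => by
      rw [Real.dist_eq, ← inner_sub_right, dist_eq_norm]
      exact (abs_real_inner_le_norm _ _).trans
        (mul_le_mul_of_nonneg_right (hu i) (norm_nonneg _))
  have hclosed : IsClosed {w | Tendsto (fun i => ⟪u i, w⟫) l (𝓝 0)} :=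
    (LipschitzWith.uniformEquicontinuous _ C hlip).equicontinuous.isClosed_setOfPred_tendsto
      continuous_const
  exact hclosed.closure_subset_iff.2 h (hD v)

lemma norm_sub_sub_le_of_tendsto_sum {E G : Type*} [NormedAddCommGroup E] [NormedSpace ℝ E]
    [NormedAddCommGroup G] [NormedSpace ℝ G] {F : E → G} (hF : Continuous F) (T : E →L[ℝ] G)
    (w : E) {z : ℕ → E} {v : E} (hz : Tendsto (fun n => ∑ k ∈ range n, z k) atTop (𝓝 v))
    {c : ℕ → ℝ} {C : ℝ} (hC : ∀ n, ∑ k ∈ range n, c k ≤ C)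
    (hstep : ∀ n,
      ‖F (w + ∑ k ∈ range (n + 1), z k) - F (w + ∑ k ∈ range n, z k) - T (z n)‖ ≤ c n) :
    ‖F (w + v) - F w - T v‖ ≤ C := by
  have hpartial : ∀ n, ‖F (w + ∑ k ∈ range n, z k) - F w - T (∑ k ∈ range n, z k)‖ ≤
      ∑ k ∈ range n, c k := by
    intro n
    induction n with
    | zero => simp
    | succ n ih =>
      have hsplit : F (w + ∑ k ∈ range (n + 1), z k) - F w - T (∑ k ∈ range (n + 1), z k) =
          (F (w + ∑ k ∈ range (n + 1), z k) - F (w + ∑ k ∈ range n, z k) - T (z n)) +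
            (F (w + ∑ k ∈ range n, z k) - F w - T (∑ k ∈ range n, z k)) := by
        rw [sum_range_succ z n, map_add]; abel
      rw [hsplit, sum_range_succ c n, add_comm (∑ k ∈ range n, c k)]
      exact (norm_add_le _ _).trans (add_le_add (hstep n) ih)
  have hlim : Tendsto (fun n => F (w + ∑ k ∈ range n, z k) - F w - T (∑ k ∈ range n, z k))
      atTop (𝓝 (F (w + v) - F w - T v)) :=
    (((hF.tendsto _).comp (tendsto_const_nhds.add hz)).sub_const _).sub
      ((T.continuous.tendsto _).comp hz)
  exact le_of_tendsto' hlim.norm fun n => (hpartial n).trans (hC n)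

section SparseApproximation

variable {H1 : Type*} [NormedAddCommGroup H1] [InnerProductSpace ℝ H1]
  {M : Type*} [NormedAddCommGroup M] [NormedSpace ℝ M] {I : Type*}

namespace SparseApproxTriple

variable (S : SparseApproxTriple H1 M I)

lemma zero_mem_A_s17 : (0 : M) ∈ S.A :=
  have ⟨i⟩ := S.index_nonempty
  Set.mem_iUnion.2 ⟨i, (S.Asub i).zero_mem⟩

lemma neg_mem_A {a : M} (ha : a ∈ S.A) : -a ∈ S.A :=
  have ⟨i, hi⟩ := Set.mem_iUnion.1 ha
  Set.mem_iUnion.2 ⟨i, (S.Asub i).neg_mem hi⟩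

lemma mem_sumSet {k : ℕ} [NeZero k] {a : M} (ha : a ∈ S.A) : a ∈ S.sumSet k :=
  ⟨Pi.single 0 a, fun n => by
    rcases eq_or_ne n 0 with rfl | hn
    · simpa using ha
    · simpa [Pi.single_apply, hn] using S.zero_mem_A_s17, by simp⟩

lemma sub_mem_sumSet_two_s17 {a b : M} (ha : a ∈ S.A) (hb : b ∈ S.A) : a - b ∈ S.sumSet 2 :=
  ⟨![a, -b], fun n => by fin_cases n <;> simp [ha, S.neg_mem_A hb],
    by simp [Fin.sum_univ_two, sub_eq_add_neg]⟩

lemma add_sub_add_mem_sumSet_four {a b c d : M} (ha : a ∈ S.A) (hb : b ∈ S.A) (hc : c ∈ S.A)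
    (hd : d ∈ S.A) : (a + b) - (c + d) ∈ S.sumSet 4 :=
  ⟨![a, b, -c, -d], fun n => by fin_cases n <;> simp [ha, hb, S.neg_mem_A hc, S.neg_mem_A hd],
    by simp [Fin.sum_univ_four]; abel⟩

lemma eq_zero_of_forall_j_eq_zero (h : ∀ a ∈ S.A, S.j a = 0) (x : M) : x = 0 := by
  have hsub : (⋃ k : ℕ, {u : H1 | ∃ f : Fin (k + 1) → M,
      (∀ n, f n ∈ ⋃ i : I, (S.Asub i : Set M)) ∧ u = ∑ n, S.j (f n)}) ⊆ {0} := by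
    rintro _ ⟨_, ⟨k, rfl⟩, f, hf, rfl⟩
    simp [h _ (hf _)]
  have hjx : S.j x ∈ ({0} : Set H1) := by
    rw [← closure_singleton, (S.sparse_dense.mono hsub).closure_eq]
    trivial
  exact S.j_inj (by simpa using hjx)

lemma inner_sub_j_eq_zero {i : I} {u a z : M} (ha : a ∈ S.Asub i)
    (hmin : ∀ z ∈ S.Asub i, ‖u - a‖ ≤ ‖u - z‖) (hz : z ∈ S.Asub i) :
    ⟪S.j u - S.j a, S.j z⟫ = 0 := by
  have hH := S.common_best i u a ha hmin
  let K : Submodule ℝ H1 := (S.Asub i).map S.j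
  refine (Submodule.norm_eq_iInf_iff_real_inner_eq_zero K ⟨a, ha, rfl⟩).1 ?_ _ ⟨z, hz, rfl⟩
  have : Nonempty (K : Set H1) := ⟨⟨_, a, ha, rfl⟩⟩
  refine le_antisymm (le_ciInf ?_) (ciInf_le ⟨0, ?_⟩ (⟨S.j a, a, ha, rfl⟩ : (K : Set H1)))
  · rintro ⟨_, w, hw, rfl⟩
    exact hH w hw
  · rintro _ ⟨w, rfl⟩
    positivity

end SparseApproxTriple

namespace IsBestApprox

variable {S : SparseApproxTriple H1 M I}

lemma exists_subspace {x b : M} (h : IsBestApprox S.A x b) :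
    ∃ i, b ∈ S.Asub i ∧ ∀ z ∈ S.Asub i, ‖x - b‖ ≤ ‖x - z‖ :=
  have ⟨i, hi⟩ := Set.mem_iUnion.1 h.1
  ⟨i, hi, fun z hz => h.2 z (Set.mem_iUnion.2 ⟨i, hz⟩)⟩

lemma norm_eq {x b : M} (h : IsBestApprox S.A x b) : ‖x‖ = ‖b‖ + ‖x - b‖ :=
  have ⟨i, hi, hmin⟩ := h.exists_subspace
  S.norm_split_M i x b hi hmin

lemma eq_zero_of_zero {b : M} (h : IsBestApprox S.A 0 b) : b = 0 :=
  norm_le_zero_iff.1 (by simpa using h.2 0 S.zero_mem_A_s17)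

lemma sigma_eq {x b : M} (h : IsBestApprox S.A x b) : S.sigma x = ‖x - b‖ :=
  le_antisymm (csInf_le ⟨0, by rintro _ ⟨z, -, rfl⟩; positivity⟩ ⟨b, h.1, rfl⟩)
    (le_csInf ⟨_, b, h.1, rfl⟩ (by rintro _ ⟨z, hz, rfl⟩; exact h.2 z hz))

lemma abs_inner_j_le {u c z : M} (h : IsBestApprox S.A u c) (hz : z ∈ S.A) :
    |⟪S.j u, S.j z⟫| ≤ ‖c‖ * ‖S.j z‖ := by
  obtain ⟨i, hzi⟩ := Set.mem_iUnion.1 hz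
  obtain ⟨a, ha, hamin⟩ :=
    S.prox (S.Asub i) ⟨0, (S.Asub i).zero_mem⟩ (S.Asub_closed i) u
  have hac : ‖a‖ ≤ ‖c‖ := by
    have := S.norm_split_M i u a ha hamin
    have := h.norm_eq
    linarith [h.2 a (Set.mem_iUnion.2 ⟨i, ha⟩)]
  have hinner : ⟪S.j u, S.j z⟫ = ⟪S.j a, S.j z⟫ := by
    rw [← sub_eq_zero, ← inner_sub_left, S.inner_sub_j_eq_zero ha hamin hzi]
  rw [hinner]
  calc |⟪S.j a, S.j z⟫| ≤ ‖S.j a‖ * ‖S.j z‖ := abs_real_inner_le_norm _ _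
    _ ≤ ‖c‖ * ‖S.j z‖ := by gcongr; exact (S.j_norm_le a).trans hac

lemma norm_le_of_sub {x xa u : M} (h₁ : IsBestApprox S.A x xa)
    (h₂ : IsBestApprox S.A (x - xa) u) : ‖u‖ ≤ ‖xa‖ := by
  have := h₂.norm_eq
  have := h₁.2 u h₂.1
  have : ‖x - u‖ ≤ ‖x - xa - u‖ + ‖xa‖ := by
    simpa [sub_right_comm x xa u] using norm_add_le (x - xa - u) xa
  linarith

end IsBestApprox

namespace SparseApproxTriple

variable (S : SparseApproxTriple H1 M I)

lemma sigma_zero : S.sigma 0 = 0 := by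
  have h : IsBestApprox S.A 0 0 := ⟨S.zero_mem_A_s17, fun z _ => by simp⟩
  simpa using h.sigma_eq

lemma aA_bddAbove : BddAbove {r : ℝ | ∃ x xa u : M, x ≠ 0 ∧ IsBestApprox S.A x xa ∧
    IsBestApprox S.A (x - xa) u ∧ r = (‖S.j u‖ / ‖xa‖) ^ 2} := by
  refine ⟨1, ?_⟩
  rintro _ ⟨x, xa, u, -, h₁, h₂, rfl⟩
  exact pow_le_one₀ (by positivity)
    (div_le_one_of_le₀ ((S.j_norm_le u).trans (h₁.norm_le_of_sub h₂)) (norm_nonneg _))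

end SparseApproxTriple

lemma IsBestApprox.norm_j_le_sqrt_aA_mul {S : SparseApproxTriple H1 M I} {x xa u : M}
    (h₁ : IsBestApprox S.A x xa) (h₂ : IsBestApprox S.A (x - xa) u) :
    ‖S.j u‖ ≤ √S.aA * ‖xa‖ := by
  have hu := h₁.norm_le_of_sub h₂
  rcases eq_or_ne xa 0 with rfl | hxa
  · simpa using (S.j_norm_le u).trans hu
  have hx : x ≠ 0 := by
    rintro rfl
    exact hxa h₁.eq_zero_of_zero
  have hle : (‖S.j u‖ / ‖xa‖) ^ 2 ≤ S.aA :=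
    le_csSup S.aA_bddAbove ⟨x, xa, u, hx, h₁, h₂, rfl⟩
  calc ‖S.j u‖ = √((‖S.j u‖ / ‖xa‖) ^ 2) * ‖xa‖ := by
        rw [Real.sqrt_sq (by positivity), div_mul_cancel₀ _ (norm_ne_zero_iff.2 hxa)]
    _ ≤ √S.aA * ‖xa‖ := by gcongr

namespace SparseApproxTriple

variable (S : SparseApproxTriple H1 M I)

lemma exists_isBestApprox (x : M) : ∃ b, IsBestApprox S.A x b :=
  S.prox S.A ⟨0, S.zero_mem_A_s17⟩ S.A_closed x

noncomputable def bestApprox (x : M) : M := (S.exists_isBestApprox x).choose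

lemma isBestApprox_bestApprox (x : M) : IsBestApprox S.A x (S.bestApprox x) :=
  (S.exists_isBestApprox x).choose_spec

noncomputable def residual (x : M) : ℕ → M
  | 0 => x
  | n + 1 => residual x n - S.bestApprox (residual x n)

noncomputable def atom (x : M) (n : ℕ) : M := S.bestApprox (S.residual x n)

section Greedy

variable (x : M)

@[simp] lemma residual_zero : S.residual x 0 = x := rfl

lemma residual_succ (n : ℕ) : S.residual x (n + 1) = S.residual x n - S.atom x n := rfl

lemma isBestApprox_atom (n : ℕ) : IsBestApprox S.A (S.residual x n) (S.atom x n) :=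
  S.isBestApprox_bestApprox _

lemma atom_mem_A (n : ℕ) : S.atom x n ∈ S.A := (S.isBestApprox_atom x n).1

lemma norm_atom_eq (n : ℕ) : ‖S.atom x n‖ = ‖S.residual x n‖ - ‖S.residual x (n + 1)‖ := by
  rw [(S.isBestApprox_atom x n).norm_eq, residual_succ]
  ring

lemma sum_atom (m n : ℕ) :
    ∑ k ∈ range n, S.atom x (m + k) = S.residual x m - S.residual x (m + n) := by
  have hatom : ∀ k, S.atom x (m + k) = S.residual x (m + k) - S.residual x (m + (k + 1)) :=
    fun k => by rw [← add_assoc, residual_succ, sub_sub_cancel]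
  simp_rw [hatom]
  simpa using sum_range_sub' (fun k => S.residual x (m + k)) n

lemma sum_norm_atom_le (m n : ℕ) : ∑ k ∈ range n, ‖S.atom x (m + k)‖ ≤ ‖S.residual x m‖ := by
  simp_rw [norm_atom_eq, add_assoc]
  rw [sum_range_sub' (fun k => ‖S.residual x (m + k)‖) n, add_zero]
  exact sub_le_self _ (norm_nonneg _)

lemma norm_residual_le (n : ℕ) : ‖S.residual x n‖ ≤ ‖x‖ := by
  induction n with
  | zero => rfl
  | succ n ih => linarith [S.norm_atom_eq x n, norm_nonneg (S.atom x n)]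

lemma tendsto_norm_atom : Tendsto (fun n => ‖S.atom x n‖) atTop (𝓝 0) :=
  (summable_of_sum_range_le (fun _ => norm_nonneg _) fun n => by
    simpa using S.sum_norm_atom_le x 0 n).tendsto_atTop_zero

lemma norm_residual_one : ‖S.residual x 1‖ = S.sigma x :=
  (S.isBestApprox_bestApprox x).sigma_eq.symm

lemma norm_j_atom_succ_le (n : ℕ) : ‖S.j (S.atom x (n + 1))‖ ≤ √S.aA * ‖S.atom x n‖ :=
  (S.isBestApprox_atom x n).norm_j_le_sqrt_aA_mul (S.isBestApprox_atom x (n + 1))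

lemma sum_norm_j_atom_le (n : ℕ) :
    ∑ k ∈ range n, ‖S.j (S.atom x (2 + k))‖ ≤ √S.aA * S.sigma x :=
  calc ∑ k ∈ range n, ‖S.j (S.atom x (2 + k))‖
      ≤ ∑ k ∈ range n, √S.aA * ‖S.atom x (1 + k)‖ := sum_le_sum fun k _ => by
        rw [show 2 + k = 1 + k + 1 by ring]
        exact S.norm_j_atom_succ_le x (1 + k)
    _ = √S.aA * ∑ k ∈ range n, ‖S.atom x (1 + k)‖ := (mul_sum _ _ _).symm
    _ ≤ √S.aA * S.sigma x := by
        rw [← S.norm_residual_one]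
        gcongr
        exact S.sum_norm_atom_le x 1 n

lemma abs_inner_j_residual_le (n : ℕ) :
    |⟪S.j (S.residual x n), S.j (x - S.residual x n)⟫| ≤ ‖S.atom x n‖ * ‖x‖ := by
  have hx : x - S.residual x n = ∑ k ∈ range n, S.atom x k := by
    simpa using (S.sum_atom x 0 n).symm
  rw [hx, map_sum, inner_sum]
  calc |∑ k ∈ range n, ⟪S.j (S.residual x n), S.j (S.atom x k)⟫|
      ≤ ∑ k ∈ range n, |⟪S.j (S.residual x n), S.j (S.atom x k)⟫| := abs_sum_le_sum_abs _ _
    _ ≤ ∑ k ∈ range n, ‖S.atom x n‖ * ‖S.atom x k‖ := sum_le_sum fun k _ =>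
        ((S.isBestApprox_atom x n).abs_inner_j_le (S.atom_mem_A x k)).trans
          (by gcongr; exact S.j_norm_le _)
    _ = ‖S.atom x n‖ * ∑ k ∈ range n, ‖S.atom x k‖ := (mul_sum _ _ _).symm
    _ ≤ ‖S.atom x n‖ * ‖x‖ := by
        gcongr
        simpa using S.sum_norm_atom_le x 0 n

lemma tendsto_inner_j_residual (v : H1) :
    Tendsto (fun n => ⟪S.j (S.residual x n), v⟫) atTop (𝓝 0) := by
  refine tendsto_inner_of_dense (C := ‖x‖₊)
    (fun n => (S.j_norm_le _).trans (S.norm_residual_le x n)) S.sparse_dense ?_ v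
  rintro _ ⟨_, ⟨k, rfl⟩, f, hf, rfl⟩
  simp_rw [inner_sum]
  simpa using tendsto_finsetSum _ fun i _ => squeeze_zero_norm
    (fun n => (Real.norm_eq_abs _).trans_le ((S.isBestApprox_atom x n).abs_inner_j_le (hf i)))
    (by simpa using (S.tendsto_norm_atom x).mul_const ‖S.j (f i)‖)

lemma tendsto_j_residual : Tendsto (fun n => S.j (S.residual x n)) atTop (𝓝 0) := by
  have hbound : ∀ n, ‖S.j (S.residual x n)‖ ^ 2 ≤
      |⟪S.j (S.residual x n), S.j x⟫| + ‖S.atom x n‖ * ‖x‖ := by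
    intro n
    have hsq : ‖S.j (S.residual x n)‖ ^ 2 = ⟪S.j (S.residual x n), S.j x⟫ -
        ⟪S.j (S.residual x n), S.j (x - S.residual x n)⟫ := by
      rw [map_sub, inner_sub_right, real_inner_self_eq_norm_sq]
      ring
    rw [hsq]
    linarith [le_abs_self ⟪S.j (S.residual x n), S.j x⟫,
      neg_abs_le ⟪S.j (S.residual x n), S.j (x - S.residual x n)⟫, S.abs_inner_j_residual_le x n]
  have hsq : Tendsto (fun n => ‖S.j (S.residual x n)‖ ^ 2) atTop (𝓝 0) :=
    squeeze_zero (fun n => by positivity) hbound (by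
      simpa using (S.tendsto_inner_j_residual x (S.j x)).abs.add
        ((S.tendsto_norm_atom x).mul_const ‖x‖))
  rw [tendsto_zero_iff_norm_tendsto_zero]
  simpa using hsq.sqrt

lemma tendsto_sum_j_atom (m : ℕ) : Tendsto (fun n => ∑ k ∈ range n, S.j (S.atom x (m + k)))
    atTop (𝓝 (S.j (S.residual x m))) := by
  simp_rw [← map_sum, S.sum_atom, map_sub]
  simpa using tendsto_const_nhds.sub
    ((S.tendsto_j_residual x).comp ((tendsto_add_atTop_nat m).congr fun n => add_comm n m))

lemma norm_j_residual_two_le : ‖S.j (S.residual x 2)‖ ≤ √S.aA * S.sigma x :=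
  le_of_tendsto' (S.tendsto_sum_j_atom x 2).norm fun n =>
    (norm_sum_le _ _).trans (S.sum_norm_j_atom_le x n)

end Greedy

variable {H2 : Type*} [NormedAddCommGroup H2] [NormedSpace ℝ H2] {F : H1 → H2} (T : H1 →L[ℝ] H2)
  {γ₂ γ₄ : ℝ}

lemma nonneg_of_norm_defect_le {k : ℕ} [NeZero k] {γ : ℝ}
    (hγ : ∀ x : M, ∀ z ∈ S.sumSet k,
      ‖F (S.j x + S.j z) - F (S.j x) - T (S.j z)‖ ≤ γ * ‖S.j z‖)
    {a : M} (ha : a ∈ S.A) (hja : S.j a ≠ 0) : 0 ≤ γ :=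
  nonneg_of_mul_nonneg_left ((norm_nonneg _).trans (hγ 0 a (S.mem_sumSet ha)))
    (norm_pos_iff.2 hja)

lemma norm_defect_residual_two_le (hF : Continuous F)
    (hγ₂ : ∀ x : M, ∀ z ∈ S.sumSet 2,
      ‖F (S.j x + S.j z) - F (S.j x) - T (S.j z)‖ ≤ γ₂ * ‖S.j z‖)
    (hγ₂0 : 0 ≤ γ₂) (w x y : M) :
    ‖F (S.j w + S.j (S.residual x 2 - S.residual y 2)) - F (S.j w) -
        T (S.j (S.residual x 2 - S.residual y 2))‖ ≤
      γ₂ * (√S.aA * (S.sigma x + S.sigma y)) := by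
  let d : ℕ → M := fun k => S.atom x (2 + k) - S.atom y (2 + k)
  refine norm_sub_sub_le_of_tendsto_sum hF T (S.j w) (z := fun k => S.j (d k))
    (c := fun k => γ₂ * ‖S.j (d k)‖) ?_ (fun n => ?_) (fun n => ?_)
  · simpa [d, sum_sub_distrib] using (S.tendsto_sum_j_atom x 2).sub (S.tendsto_sum_j_atom y 2)
  · rw [← mul_sum]
    gcongr
    calc ∑ k ∈ range n, ‖S.j (d k)‖
        ≤ ∑ k ∈ range n, (‖S.j (S.atom x (2 + k))‖ + ‖S.j (S.atom y (2 + k))‖) :=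
          sum_le_sum fun k _ => by simpa only [d, map_sub] using norm_sub_le _ _
      _ ≤ √S.aA * S.sigma x + √S.aA * S.sigma y := by
          rw [sum_add_distrib]
          exact add_le_add (S.sum_norm_j_atom_le x n) (S.sum_norm_j_atom_le y n)
      _ = √S.aA * (S.sigma x + S.sigma y) := (mul_add _ _ _).symm
  · simpa only [sum_range_succ, map_add, map_sum, add_assoc] using
      hγ₂ (w + ∑ k ∈ range n, d k) (d n)
        (S.sub_mem_sumSet_two_s17 (S.atom_mem_A x _) (S.atom_mem_A y _))

lemma norm_defect_le (hF : Continuous F)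
    (hγ₂ : ∀ x : M, ∀ z ∈ S.sumSet 2,
      ‖F (S.j x + S.j z) - F (S.j x) - T (S.j z)‖ ≤ γ₂ * ‖S.j z‖)
    (hγ₄ : ∀ x : M, ∀ z ∈ S.sumSet 4,
      ‖F (S.j x + S.j z) - F (S.j x) - T (S.j z)‖ ≤ γ₄ * ‖S.j z‖)
    (hγ₂0 : 0 ≤ γ₂) (hγ₄0 : 0 ≤ γ₄) (w x y : M) :
    ‖F (S.j w + S.j (x - y)) - F (S.j w) - T (S.j (x - y))‖ ≤
      γ₄ * ‖S.j x - S.j y‖ + (γ₂ + γ₄) * √S.aA * (S.sigma x + S.sigma y) := by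
  let P := (S.atom x 0 + S.atom x 1) - (S.atom y 0 + S.atom y 1)
  let D := S.residual x 2 - S.residual y 2
  have hdecomp : x - y = P + D := by
    simp only [P, D, residual_succ, residual_zero]
    abel
  have hP : ‖S.j P‖ ≤ ‖S.j x - S.j y‖ + √S.aA * (S.sigma x + S.sigma y) :=
    calc ‖S.j P‖ = ‖(S.j x - S.j y) - (S.j (S.residual x 2) - S.j (S.residual y 2))‖ := by
          rw [← map_sub, ← map_sub, ← map_sub, hdecomp, add_sub_cancel_right]
      _ ≤ ‖S.j x - S.j y‖ + (‖S.j (S.residual x 2)‖ + ‖S.j (S.residual y 2)‖) :=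
          (norm_sub_le _ _).trans (add_le_add le_rfl (norm_sub_le _ _))
      _ ≤ ‖S.j x - S.j y‖ + √S.aA * (S.sigma x + S.sigma y) := by
          linarith [S.norm_j_residual_two_le x, S.norm_j_residual_two_le y]
  have hhead := hγ₄ w P (S.add_sub_add_mem_sumSet_four (S.atom_mem_A x 0) (S.atom_mem_A x 1)
    (S.atom_mem_A y 0) (S.atom_mem_A y 1))
  have htail := S.norm_defect_residual_two_le T hF hγ₂ hγ₂0 (w + P) x y
  calc ‖F (S.j w + S.j (x - y)) - F (S.j w) - T (S.j (x - y))‖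
      = ‖(F (S.j w + S.j P) - F (S.j w) - T (S.j P)) +
          (F (S.j (w + P) + S.j D) - F (S.j (w + P)) - T (S.j D))‖ := by
        rw [hdecomp, map_add, map_add, map_add, add_assoc]
        congr 1
        abel
    _ ≤ γ₄ * ‖S.j P‖ + γ₂ * (√S.aA * (S.sigma x + S.sigma y)) :=
        (norm_add_le _ _).trans (add_le_add hhead htail)
    _ ≤ γ₄ * (‖S.j x - S.j y‖ + √S.aA * (S.sigma x + S.sigma y)) +
          γ₂ * (√S.aA * (S.sigma x + S.sigma y)) := by gcongr
    _ = γ₄ * ‖S.j x - S.j y‖ + (γ₂ + γ₄) * √S.aA * (S.sigma x + S.sigma y) := by ring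

end SparseApproxTriple

end SparseApproximation

theorem almost_linear_of_rip_general
    {H1 : Type*} [NormedAddCommGroup H1] [InnerProductSpace ℝ H1]
    {H2 : Type*} [NormedAddCommGroup H2] [InnerProductSpace ℝ H2]
    {M : Type*} [NormedAddCommGroup M] [NormedSpace ℝ M]
    {I : Type*} (S : SparseApproxTriple H1 M I)
    (T : H1 →L[ℝ] H2)
    (F : H1 → H2) (hFcont : Continuous F) (hF0 : F 0 = 0)
    (γ₂ γ₄ : ℝ)
    (hγ₂ : ∀ x : M, ∀ z ∈ S.sumSet 2,
      ‖F (S.j x + S.j z) - F (S.j x) - T (S.j z)‖ ≤ γ₂ * ‖S.j z‖)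
    (hγ₄ : ∀ x : M, ∀ z ∈ S.sumSet 4,
      ‖F (S.j x + S.j z) - F (S.j x) - T (S.j z)‖ ≤ γ₄ * ‖S.j z‖) :
    ∀ x y : M,
      ‖F (S.j x) - F (S.j y) - F (S.j x - S.j y)‖ ≤
        2 * γ₄ * ‖S.j x - S.j y‖ +
          2 * (γ₂ + γ₄) * Real.sqrt S.aA * (S.sigma x + S.sigma y) := by
  intro x y
  by_cases hA : ∀ a ∈ S.A, S.j a = 0
  · obtain rfl := S.eq_zero_of_forall_j_eq_zero hA x
    obtain rfl := S.eq_zero_of_forall_j_eq_zero hA y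
    simp [hF0, S.sigma_zero]
  obtain ⟨a, ha, hja⟩ : ∃ a ∈ S.A, S.j a ≠ 0 := by simpa using hA
  have hγ₂0 := S.nonneg_of_norm_defect_le T hγ₂ ha hja
  have hγ₄0 := S.nonneg_of_norm_defect_le T hγ₄ ha hja
  have hy := S.norm_defect_le T hFcont hγ₂ hγ₄ hγ₂0 hγ₄0 y x y
  have h0 := S.norm_defect_le T hFcont hγ₂ hγ₄ hγ₂0 hγ₄0 0 x y
  rw [← map_add, add_sub_cancel] at hy
  rw [map_zero, zero_add, hF0] at h0
  calc ‖F (S.j x) - F (S.j y) - F (S.j x - S.j y)‖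
      = ‖(F (S.j x) - F (S.j y) - T (S.j (x - y))) - (F (S.j (x - y)) - 0 - T (S.j (x - y)))‖ := by
        rw [map_sub]
        congr 1
        abel
    _ ≤ _ := (norm_sub_le _ _).trans (add_le_add hy h0)
    _ = _ := by ring

/-- Under the assumptions of Statement 16 together with
`γ₄ := γ_{F,T}(4A) < ∞`, the map `F` is almost linear on `A`:
`‖F(x) − F(y) − F(x−y)‖ ≤ 2γ₄‖x−y‖_{H1} + 2(γ₂ + γ₄)√a_A(σ_{A,M}(x) + σ_{A,M}(y))`. -/
theorem almost_linear_of_rip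
    {H1 : Type*} [NormedAddCommGroup H1] [InnerProductSpace ℝ H1] [CompleteSpace H1]
    {H2 : Type*} [NormedAddCommGroup H2] [InnerProductSpace ℝ H2] [CompleteSpace H2]
    {M : Type*} [NormedAddCommGroup M] [NormedSpace ℝ M] [CompleteSpace M]
    {I : Type*} (S : SparseApproxTriple H1 M I)
    (T : H1 →L[ℝ] H2) (δ : ℝ) (hδ0 : 0 ≤ δ) (hδ1 : δ < 1)
    (hRIP : ∀ z ∈ S.sumSet 2,
      (1 - δ) * ‖S.j z‖ ^ 2 ≤ ‖T (S.j z)‖ ^ 2 ∧ ‖T (S.j z)‖ ^ 2 ≤ (1 + δ) * ‖S.j z‖ ^ 2)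
    (hδsmall : δ < Real.sqrt 2 / 2)
    (F : H1 → H2) (hFcont : Continuous F) (hF0 : F 0 = 0)
    (γ₂ γ₄ : ℝ)
    (hγ₂ : ∀ x : M, ∀ z ∈ S.sumSet 2,
      ‖F (S.j x + S.j z) - F (S.j x) - T (S.j z)‖ ≤ γ₂ * ‖S.j z‖)
    (hγ₂lt : γ₂ < Real.sqrt 2 / 2 - Real.sqrt δ)
    (hγ₄ : ∀ x : M, ∀ z ∈ S.sumSet 4,
      ‖F (S.j x + S.j z) - F (S.j x) - T (S.j z)‖ ≤ γ₄ * ‖S.j z‖) :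
    ∀ x y : M,
      ‖F (S.j x) - F (S.j y) - F (S.j x - S.j y)‖ ≤
        2 * γ₄ * ‖S.j x - S.j y‖ +
          2 * (γ₂ + γ₄) * Real.sqrt S.aA * (S.sigma x + S.sigma y) :=
  almost_linear_of_rip_general S T F hFcont hF0 γ₂ γ₄ hγ₂ hγ₄
end
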